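/- arXiv:1108.5728 — 3 statements merged into one kernel-verified Lean document; each statement's English description precedes it below -/
import Mathlib

section
/- Let k be a field of characteristic ≠ 2 and P a finite-dimensional k-vector space of dimension m ≥ 1. The hyperbolic quadratic form H(P) on P* ⊕ P, defined by (t, v) ↦ t(v), is nondegenerate, and its Clifford algebra C(H(P)) is isomorphic as a k-algebra to End(Λ P), the endomorphism algebra of the exterior algebra of P. In particular C(H(P)) has dimension 2^(2m) and is a central simple k-algebra with trivial Brauer class. -/
noncomputable section

/-- The hyperbolic bilinear map `B((t,v),(s,w)) = t w` on `P* × P`. -/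
def hypBilin (k P : Type) [Field k] [AddCommGroup P] [Module k P] :
    LinearMap.BilinMap k (Module.Dual k P × P) k :=
  LinearMap.mk₂ k (fun x y => x.1 y.2)
    (fun _ _ _ => by simp)
    (fun _ _ _ => by simp)
    (fun _ _ _ => by simp)
    (fun _ _ _ => by simp)

/-- The hyperbolic quadratic form `H(P)` on `P* ⊕ P`, given by `(t, v) ↦ t v`. -/
def hypForm (k P : Type) [Field k] [AddCommGroup P] [Module k P] :
    QuadraticForm k (Module.Dual k P × P) :=
  (hypBilin k P).toQuadraticMap

/-- A finite-dimensional algebra is split, i.e. has trivial Brauer class. -/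
def IsBrauerTrivial (k A : Type) [Field k] [Ring A] [Algebra k A] : Prop :=
  ∃ n : ℕ, 0 < n ∧ Nonempty (A ≃ₐ[k] Matrix (Fin n) (Fin n) k)

/-!
The Fock representation lets `(t, v)` act on `Λ P` by `x ↦ t ⌋ x + v ∧ x`; its square is `t v`, so
it extends to an algebra map `C(H(P)) → End(Λ P)`. The image contains the left multiplications, the
contractions, and hence the number operators `N_i = b_i ∧ (b_i^* ⌋ ·)`, which act on the monomial
basis `b_S` by the eigenvalue `[i ∈ S]`. A product of the `N_i` and `1 - N_i` projects onto the
line `k b_T`; following it by the contraction sending `b_T` to `1` and by left multiplication with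
`b_S` gives the matrix unit `b_T ↦ b_S`. Hence the map is onto, and as both sides have dimension
`2^(2m)` it is an isomorphism; central simplicity and splitting come from the matrix algebra.
-/

namespace ExteriorAlgebra

open CliffordAlgebra Module

variable {R M I : Type*} [CommRing R] [AddCommGroup M] [Module R M]

def ιList (v : I → M) (l : List I) : ExteriorAlgebra R M :=
  (l.map fun i => ι R (v i)).prod

@[simp] lemma ιList_nil (v : I → M) : ιList (R := R) v [] = 1 := rfl

@[simp] lemma ιList_cons (v : I → M) (i : I) (l : List I) :
    ιList (R := R) v (i :: l) = ι R (v i) * ιList v l := by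
  simp [ιList]

lemma basis_eq_ιList [LinearOrder I] (b : Basis I R M) (s : Finset I) :
    b.ExteriorAlgebra s = ιList b (s.sort (· ≤ ·)) := by
  rw [basis_apply_ofCard b rfl, ιMulti_family, ιMulti_apply, ιList]
  congr 1
  apply List.ext_getElem <;>
    simp [Set.powersetCard.ofFinEmbEquiv_symm_apply, Finset.orderEmbOfFin_apply]

lemma contractLeft_ιList_eq_zero (d : Dual R M) (v : I → M) (l : List I)
    (hd : ∀ i ∈ l, d (v i) = 0) : contractLeft d (ιList (R := R) v l) = 0 := by
  induction l with
  | nil => exact contractLeft_one _ d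
  | cons i l ih =>
    rw [ιList_cons, contractLeft_ι_mul, hd i List.mem_cons_self,
      ih fun j hj => hd j (List.mem_cons_of_mem i hj), zero_smul, mul_zero, sub_zero]

section Basis

variable (b : Basis I R M)

def numberOp (i : I) : Module.End R (ExteriorAlgebra R M) :=
  LinearMap.mulLeft R (ι R (b i)) * contractLeft (b.coord i)

-- `N_i (ι (b j) * x) = ι (b j) * N_i x + δ_ij ι (b j) * x`: the sign from the contraction cancels
-- the one from anticommuting `ι (b i)` past `ι (b j)`, so `N_i` counts the occurrences of `i`.
lemma numberOp_ιList [DecidableEq I] (i : I) (l : List I) :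
    numberOp b i (ιList b l) = (l.count i : R) • ιList b l := by
  induction l with
  | nil => simp [numberOp, Module.End.mul_apply, contractLeft_one]
  | cons j l ih =>
    rw [numberOp, Module.End.mul_apply, LinearMap.mulLeft_apply] at ih ⊢
    rw [ιList_cons, contractLeft_ι_mul, mul_sub, mul_smul_comm, ← mul_assoc,
      eq_neg_of_add_eq_zero_left (ι_add_mul_swap _ _), neg_mul, mul_assoc, ih, Basis.coord_apply,
      Basis.repr_self_apply, List.count_cons]
    split_ifs with h <;> simp_all [add_smul, add_comm]

def contractLeftList (l : List I) : Module.End R (ExteriorAlgebra R M) :=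
  (l.map fun i => contractLeft (b.coord i)).reverse.prod

lemma contractLeftList_cons (i : I) (l : List I) (x : ExteriorAlgebra R M) :
    contractLeftList b (i :: l) x = contractLeftList b l (contractLeft (b.coord i) x) := by
  simp [contractLeftList, Module.End.mul_apply]

lemma contractLeftList_ιList_self (l : List I) (hl : l.Nodup) :
    contractLeftList b l (ιList b l) = 1 := by
  classical
  induction l with
  | nil => rfl
  | cons i l ih =>
    obtain ⟨hi, hl⟩ := List.nodup_cons.mp hl
    have hvanish : ∀ j ∈ l, b.coord i (b j) = 0 := fun j hj => by
      rw [Basis.coord_apply, Basis.repr_self_apply, if_neg (ne_of_mem_of_not_mem hj hi)]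
    rw [contractLeftList_cons, ιList_cons, contractLeft_ι_mul,
      contractLeft_ιList_eq_zero _ _ _ hvanish, mul_zero, sub_zero, Basis.coord_apply,
      Basis.repr_self_apply, if_pos rfl, one_smul, ih hl]

variable [LinearOrder I]

lemma numberOp_basis (i : I) (s : Finset I) :
    numberOp b i (b.ExteriorAlgebra s) = if i ∈ s then b.ExteriorAlgebra s else 0 := by
  rw [basis_eq_ιList, numberOp_ιList]
  split_ifs with h
  · rw [List.count_eq_one_of_mem (Finset.sort_nodup _ _) ((Finset.mem_sort _).mpr h),
      Nat.cast_one, one_smul]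
  · rw [List.count_eq_zero_of_not_mem (mt (Finset.mem_sort _).mp h), Nat.cast_zero, zero_smul]

def occupationSelector (T : Finset I) (i : I) : Module.End R (ExteriorAlgebra R M) :=
  if i ∈ T then numberOp b i else 1 - numberOp b i

lemma occupationSelector_basis (T : Finset I) (i : I) (s : Finset I) :
    occupationSelector b T i (b.ExteriorAlgebra s) =
      if (i ∈ s ↔ i ∈ T) then b.ExteriorAlgebra s else 0 := by
  unfold occupationSelector
  split_ifs <;> simp_all [numberOp_basis]

lemma list_prod_occupationSelector_basis (T : Finset I) (l : List I) (s : Finset I) :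
    (l.map (occupationSelector b T)).prod (b.ExteriorAlgebra s) =
      if ∀ i ∈ l, (i ∈ s ↔ i ∈ T) then b.ExteriorAlgebra s else 0 := by
  induction l with
  | nil => simp
  | cons i l ih =>
    rw [List.map_cons, List.prod_cons, Module.End.mul_apply, ih]
    split_ifs <;> simp_all [occupationSelector_basis]

variable [Fintype I]

def lineProj (T : Finset I) : Module.End R (ExteriorAlgebra R M) :=
  (Finset.univ.toList.map (occupationSelector b T)).prod

lemma lineProj_basis (T s : Finset I) :
    lineProj b T (b.ExteriorAlgebra s) = if s = T then b.ExteriorAlgebra s else 0 := by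
  rw [lineProj, list_prod_occupationSelector_basis]
  simp [Finset.ext_iff]

def matrixUnit (S T : Finset I) : Module.End R (ExteriorAlgebra R M) :=
  LinearMap.mulLeft R (b.ExteriorAlgebra S) * contractLeftList b (T.sort (· ≤ ·)) * lineProj b T

lemma matrixUnit_eq_end (S T : Finset I) : matrixUnit b S T = b.ExteriorAlgebra.end (S, T) := by
  refine b.ExteriorAlgebra.ext fun U => ?_
  rw [matrixUnit, Module.End.mul_apply, lineProj_basis, Basis.end_apply_apply]
  obtain rfl | hUT := eq_or_ne U T
  · rw [if_pos rfl, if_pos rfl, Module.End.mul_apply, basis_eq_ιList b U,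
      contractLeftList_ιList_self _ _ (Finset.sort_nodup _ _), LinearMap.mulLeft_apply, mul_one]
  · rw [if_neg hUT, if_neg hUT.symm, map_zero]

end Basis

section Finite

variable [StrongRankCondition R] [Module.Free R M] [Module.Finite R M]

instance : Module.Finite R (ExteriorAlgebra R M) := .of_basis (finBasis R M).ExteriorAlgebra

lemma finrank_exteriorAlgebra :
    finrank R (ExteriorAlgebra R M) = 2 ^ finrank R M := by
  rw [finrank_eq_card_basis (finBasis R M).ExteriorAlgebra, Fintype.card_finset,
    Fintype.card_fin]

end Finite

end ExteriorAlgebra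

section Fock

open CliffordAlgebra ExteriorAlgebra Module

variable (k P : Type) [Field k] [AddCommGroup P] [Module k P]

lemma hypForm_apply (x : Dual k P × P) : hypForm k P x = x.1 x.2 := rfl

lemma polarBilin_hypForm_apply (x y : Dual k P × P) :
    QuadraticMap.polarBilin (hypForm k P) x y = x.1 y.2 + y.1 x.2 :=
  LinearMap.BilinMap.polar_toQuadraticMap x y

lemma separatingLeft_polarBilin_hypForm :
    (QuadraticMap.polarBilin (hypForm k P)).SeparatingLeft := by
  intro x hx
  simp only [polarBilin_hypForm_apply] at hx
  have h1 : x.1 = 0 := LinearMap.ext fun w => by simpa using hx (0, w)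
  have h2 : x.2 = 0 := (Module.forall_dual_apply_eq_zero_iff k x.2).mp fun s => by
    simpa using hx (s, 0)
  exact Prod.ext h1 h2

def fockRep : CliffordAlgebra (hypForm k P) →ₐ[k] Module.End k (ExteriorAlgebra k P) :=
  CliffordAlgebra.lift (hypForm k P)
    ⟨contractLeft.comp (LinearMap.fst k (Dual k P) P) +
        (LinearMap.mul k (ExteriorAlgebra k P)).comp ((ι k).comp (LinearMap.snd k (Dual k P) P)),
      fun x => LinearMap.ext fun a => by
        simp only [LinearMap.add_apply, LinearMap.comp_apply, Module.End.mul_apply, map_add,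
          LinearMap.mul_apply', contractLeft_contractLeft, contractLeft_ι_mul, ← mul_assoc,
          ι_sq_zero, zero_mul, Module.algebraMap_end_apply, hypForm_apply]
        abel⟩

lemma fockRep_ι (t : Dual k P) (v : P) :
    fockRep k P (CliffordAlgebra.ι _ (t, v)) = contractLeft t + LinearMap.mulLeft k (ι k v) := by
  ext; simp [fockRep]

lemma contractLeft_mem_range_fockRep (t : Dual k P) :
    contractLeft t ∈ (fockRep k P).range :=
  ⟨CliffordAlgebra.ι _ (t, 0), by simp [fockRep_ι]⟩

lemma mulLeft_mem_range_fockRep (x : ExteriorAlgebra k P) :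
    LinearMap.mulLeft k x ∈ (fockRep k P).range := by
  suffices h : (fockRep k P).range.comap (Algebra.lmul k (ExteriorAlgebra k P)) = ⊤ from
    h.ge (Algebra.mem_top (x := x))
  rw [eq_top_iff, ← CliffordAlgebra.adjoin_range_ι, Algebra.adjoin_le_iff]
  rintro _ ⟨v, rfl⟩
  exact ⟨CliffordAlgebra.ι _ (0, v), by simp [fockRep_ι]; rfl⟩

lemma matrixUnit_mem_range_fockRep {I : Type*} [LinearOrder I] [Fintype I] (b : Basis I k P)
    (S T : Finset I) :
    matrixUnit b S T ∈ (fockRep k P).range := by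
  have hN : ∀ i, numberOp b i ∈ (fockRep k P).range :=
    fun i => mul_mem (mulLeft_mem_range_fockRep k P _) (contractLeft_mem_range_fockRep k P _)
  refine mul_mem (mul_mem (mulLeft_mem_range_fockRep k P _) ?_) ?_
  · refine Subalgebra.list_prod_mem _ fun x hx => ?_
    obtain ⟨i, -, rfl⟩ := List.mem_map.mp (List.mem_reverse.mp hx)
    exact contractLeft_mem_range_fockRep k P _
  · refine Subalgebra.list_prod_mem _ fun x hx => ?_
    obtain ⟨i, -, rfl⟩ := List.mem_map.mp hx
    unfold occupationSelector
    split_ifs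
    exacts [hN i, sub_mem (one_mem _) (hN i)]

theorem fockRep_surjective [FiniteDimensional k P] : Function.Surjective (fockRep k P) := by
  let B := (Module.finBasis k P).ExteriorAlgebra
  have hspan : Submodule.span k (Set.range B.end) ≤ Subalgebra.toSubmodule (fockRep k P).range :=
    Submodule.span_le.mpr <| Set.range_subset_iff.mpr fun ST => by
      rw [← matrixUnit_eq_end]
      exact matrixUnit_mem_range_fockRep k P _ ST.1 ST.2
  exact fun g => hspan (B.end.mem_span g)

lemma finrank_cliffordAlgebra_hypForm [Invertible (2 : k)] [FiniteDimensional k P] :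
    finrank k (CliffordAlgebra (hypForm k P)) = 2 ^ (2 * finrank k P) := by
  rw [(equivExterior (hypForm k P)).finrank_eq, finrank_exteriorAlgebra, finrank_prod,
    Subspace.dual_finrank_eq, two_mul]

theorem fockRep_bijective [Invertible (2 : k)] [FiniteDimensional k P] :
    Function.Bijective (fockRep k P) := by
  have hdim : finrank k (CliffordAlgebra (hypForm k P)) =
      finrank k (Module.End k (ExteriorAlgebra k P)) := by
    rw [finrank_cliffordAlgebra_hypForm, Module.finrank_linearMap, finrank_exteriorAlgebra,
      ← pow_add, two_mul]
  have : FiniteDimensional k (CliffordAlgebra (hypForm k P)) :=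
    Module.finite_of_finrank_pos (by rw [finrank_cliffordAlgebra_hypForm]; positivity)
  have hsurj := fockRep_surjective k P
  exact ⟨(LinearMap.injective_iff_surjective_of_finrank_eq_finrank
    (f := (fockRep k P).toLinearMap) hdim).mpr hsurj, hsurj⟩

def fockRepEquiv [Invertible (2 : k)] [FiniteDimensional k P] :
    CliffordAlgebra (hypForm k P) ≃ₐ[k] Module.End k (ExteriorAlgebra k P) :=
  AlgEquiv.ofBijective (fockRep k P) (fockRep_bijective k P)

end Fock

lemma isCentral_isSimpleRing_isBrauerTrivial_of_algEquiv_matrix {k A : Type} [Field k] [Ring A]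
    [Algebra k A] {n : ℕ} (hn : 0 < n) (e : A ≃ₐ[k] Matrix (Fin n) (Fin n) k) :
    Algebra.IsCentral k A ∧ IsSimpleRing A ∧ IsBrauerTrivial k A := by
  have : Nonempty (Fin n) := ⟨⟨0, hn⟩⟩
  exact ⟨.of_algEquiv k _ _ e.symm, .of_ringEquiv e.symm.toRingEquiv inferInstance,
    n, hn, ⟨e⟩⟩

theorem clifford_hyperbolic_form_general
    (k P : Type) [Field k] [AddCommGroup P] [Module k P] [FiniteDimensional k P]
    (hchar : (2 : k) ≠ 0)
    (m : ℕ) (hm : Module.finrank k P = m) :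
    (QuadraticMap.polarBilin (hypForm k P)).SeparatingLeft ∧
    Nonempty (CliffordAlgebra (hypForm k P) ≃ₐ[k]
      Module.End k (ExteriorAlgebra k P)) ∧
    Module.finrank k (CliffordAlgebra (hypForm k P)) = 2 ^ (2 * m) ∧
    Algebra.IsCentral k (CliffordAlgebra (hypForm k P)) ∧
    IsSimpleRing (CliffordAlgebra (hypForm k P)) ∧
    IsBrauerTrivial k (CliffordAlgebra (hypForm k P)) := by
  subst hm
  let := invertibleOfNonzero hchar
  let eMatrix := (fockRepEquiv k P).trans
    (algEquivMatrix (Module.finBasis k (ExteriorAlgebra k P)))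
  have hpos : 0 < Module.finrank k (ExteriorAlgebra k P) := by
    rw [ExteriorAlgebra.finrank_exteriorAlgebra]; positivity
  exact ⟨separatingLeft_polarBilin_hypForm k P, ⟨fockRepEquiv k P⟩,
    finrank_cliffordAlgebra_hypForm k P,
    isCentral_isSimpleRing_isBrauerTrivial_of_algEquiv_matrix hpos eMatrix⟩

/-- The hyperbolic form `H(P)` is nondegenerate and its Clifford algebra is
isomorphic to `End(Λ P)`; in particular it has dimension `2^(2m)` and is a
central simple algebra with trivial Brauer class. -/
theorem clifford_hyperbolic_form
    (k P : Type) [Field k] [AddCommGroup P] [Module k P] [FiniteDimensional k P]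
    (hchar : (2 : k) ≠ 0)
    (m : ℕ) (hm : Module.finrank k P = m) (hm1 : 1 ≤ m) :
    (QuadraticMap.polarBilin (hypForm k P)).SeparatingLeft ∧
    Nonempty (CliffordAlgebra (hypForm k P) ≃ₐ[k]
      Module.End k (ExteriorAlgebra k P)) ∧
    Module.finrank k (CliffordAlgebra (hypForm k P)) = 2 ^ (2 * m) ∧
    Algebra.IsCentral k (CliffordAlgebra (hypForm k P)) ∧
    IsSimpleRing (CliffordAlgebra (hypForm k P)) ∧
    IsBrauerTrivial k (CliffordAlgebra (hypForm k P)) :=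
  clifford_hyperbolic_form_general k P hchar m hm
end
end

section
/- Let R be a commutative ring in which 2 is invertible, and let (M, q) and (M', q') be quadratic modules over R with values in R. Then there is a natural R-algebra isomorphism C₀(q ⊥ q') ≅ C₀(q) ⊗ C₀(q') ⊕ C₁(q) ⊗ C₁(q'), where the right-hand side is given the algebra structure with multiplication defined using the C₀-bimodule structure on C₁ and the multiplication map C₁ ⊗_{C₀} C₁ → C₀, and the isomorphism sends (v + v') ⊗ (w + w') to v·w ⊗ 1 + 1 ⊗ v'·w' + v ⊗ w' − w ⊗ v' for v, w ∈ M and v', w' ∈ M'. -/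
open scoped TensorProduct
open CliffordAlgebra


section
variable {R M N : Type} [CommRing R]
  [AddCommGroup M] [Module R M] [AddCommGroup N] [Module R N]
  {Q : QuadraticForm R M} {Qₙ : QuadraticForm R N}

theorem aux_map_mem_evenOdd (f : Q →qᵢ Qₙ) {i : ZMod 2} {x : CliffordAlgebra Q}
    (hx : x ∈ evenOdd Q i) : CliffordAlgebra.map f x ∈ evenOdd Qₙ i := by
  induction hx using Submodule.iSup_induction' with
  | zero => rw [map_zero]; exact Submodule.zero_mem _
  | add _ _ _ _ ihx ihy => rw [map_add]; exact add_mem ihx ihy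
  | mem j v hv =>
    obtain ⟨jn, rfl⟩ := j
    refine Submodule.mem_iSup_of_mem ⟨jn, rfl⟩ ?_
    dsimp only at hv ⊢
    induction hv using Submodule.pow_induction_on_left' with
    | algebraMap r => rw [AlgHom.commutes, pow_zero]; exact Submodule.mem_one.mpr ⟨r, by simp⟩
    | add _ _ _ _ _ ihx ihy => rw [map_add]; exact add_mem ihx ihy
    | mem_mul m hm i x hx ih =>
      obtain ⟨v, rfl⟩ := hm
      rw [map_mul, CliffordAlgebra.map_apply_ι, pow_succ']
      exact Submodule.mul_mem_mul (LinearMap.mem_range_self _ _) ih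
end

section
variable {R M M' : Type} [CommRing R]
  [AddCommGroup M] [Module R M] [AddCommGroup M'] [Module R M']
  (Q : QuadraticForm R M) (Q' : QuadraticForm R M')

noncomputable def NN (i : ZMod 2) : Submodule R (evenOdd Q ᵍ⊗[R] evenOdd Q') :=
  Submodule.map (GradedTensorProduct.of R (evenOdd Q) (evenOdd Q')).toLinearMap
    (LinearMap.range (TensorProduct.mapIncl (evenOdd Q 0) (evenOdd Q' i)) ⊔
     LinearMap.range (TensorProduct.mapIncl (evenOdd Q 1) (evenOdd Q' (i+1))))

theorem tmul_mem_NN {j k : ZMod 2} {a b} (ha : a ∈ evenOdd Q j) (hb : b ∈ evenOdd Q' k) :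
    (a ᵍ⊗ₜ[R] b) ∈ NN Q Q' (j + k) := by
  have hcase : ∀ j : ZMod 2, j = 0 ∨ j = 1 := by decide
  obtain rfl | rfl := hcase j <;> obtain rfl | rfl := hcase k
  · exact ⟨_, Submodule.mem_sup_left
      ⟨(⟨a, ha⟩ : evenOdd Q 0) ⊗ₜ (⟨b, by exact hb⟩ : evenOdd Q' (0 + 0)), rfl⟩, rfl⟩
  · exact ⟨_, Submodule.mem_sup_left
      ⟨(⟨a, ha⟩ : evenOdd Q 0) ⊗ₜ (⟨b, by exact hb⟩ : evenOdd Q' (0 + 1)), rfl⟩, rfl⟩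
  · exact ⟨_, Submodule.mem_sup_right
      ⟨(⟨a, ha⟩ : evenOdd Q 1) ⊗ₜ (⟨b, by exact hb⟩ : evenOdd Q' (1 + 0 + 1)), rfl⟩, rfl⟩
  · exact ⟨_, Submodule.mem_sup_right
      ⟨(⟨a, ha⟩ : evenOdd Q 1) ⊗ₜ (⟨b, by exact hb⟩ : evenOdd Q' (1 + 1 + 1)), rfl⟩, rfl⟩
end

section
variable {R M M' : Type} [CommRing R]
  [AddCommGroup M] [Module R M] [AddCommGroup M'] [Module R M']
  (Q : QuadraticForm R M) (Q' : QuadraticForm R M')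

theorem range_mapIncl_le (j k : ZMod 2) (p : Submodule R (evenOdd Q ᵍ⊗[R] evenOdd Q'))
    (h : ∀ a b, a ∈ evenOdd Q j → b ∈ evenOdd Q' k → (a ᵍ⊗ₜ[R] b) ∈ p) :
    Submodule.map (GradedTensorProduct.of R (evenOdd Q) (evenOdd Q')).toLinearMap
      (LinearMap.range (TensorProduct.mapIncl (evenOdd Q j) (evenOdd Q' k))) ≤ p := by
  rw [Submodule.map_le_iff_le_comap]
  rintro _ ⟨t, rfl⟩
  induction t with
  | zero => simp only [Submodule.mem_comap, map_zero]; exact p.zero_mem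
  | add x y hx hy =>
    simp only [Submodule.mem_comap, map_add] at hx hy ⊢
    exact p.add_mem hx hy
  | tmul x y => exact h _ _ x.2 y.2

theorem NN_le (i : ZMod 2) (p : Submodule R (evenOdd Q ᵍ⊗[R] evenOdd Q'))
    (h : ∀ j k, j + k = i → ∀ a b, a ∈ evenOdd Q j → b ∈ evenOdd Q' k → (a ᵍ⊗ₜ[R] b) ∈ p) :
    NN Q Q' i ≤ p := by
  rw [NN, Submodule.map_sup]
  exact sup_le (range_mapIncl_le Q Q' 0 i p (h 0 i (zero_add i)))
    (range_mapIncl_le Q Q' 1 (i+1) p (h 1 (i+1)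
      (by rw [add_comm i 1, ← add_assoc, show ((1:ZMod 2)+1) = 0 from rfl, zero_add])))

theorem mul_mem_NN (m : M × M') {i : ZMod 2} {y : evenOdd Q ᵍ⊗[R] evenOdd Q'}
    (hy : y ∈ NN Q Q' i) : ofProd Q Q' (ι (Q.prod Q') m) * y ∈ NN Q Q' (i + 1) := by
  refine NN_le Q Q' i ((NN Q Q' (i+1)).comap
    (LinearMap.mulLeft R (ofProd Q Q' (ι (Q.prod Q') m)))) ?_ hy
  intro j k hjk a b ha hb
  simp only [Submodule.mem_comap, LinearMap.mulLeft_apply]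
  rw [ofProd_ι_mk, add_mul]
  refine add_mem ?_ ?_
  · have h1 : (ι Q m.1 ᵍ⊗ₜ[R] (1:CliffordAlgebra Q')) * (a ᵍ⊗ₜ[R] b)
        = (ι Q m.1 * a) ᵍ⊗ₜ[R] b :=
      GradedTensorProduct.tmul_one_mul_coe_tmul (evenOdd Q) (evenOdd Q') (ι Q m.1) (⟨a, ha⟩ : evenOdd Q j) b
    rw [h1]
    have h := tmul_mem_NN Q Q' (SetLike.mul_mem_graded (ι_mem_evenOdd_one Q m.1) ha) hb
    rwa [show (1+j)+k = i+1 by rw [← hjk]; ring] at h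
  · have h2 := GradedTensorProduct.tmul_coe_mul_coe_tmul (evenOdd Q) (evenOdd Q')
      (1:CliffordAlgebra Q) (⟨ι Q' m.2, ι_mem_evenOdd_one Q' m.2⟩ : evenOdd Q' 1)
      (⟨a, ha⟩ : evenOdd Q j) b
    rw [h2]
    have h := tmul_mem_NN Q Q' ha (SetLike.mul_mem_graded (ι_mem_evenOdd_one Q' m.2) hb)
    rw [show j+(1+k) = i+1 by rw [← hjk]; ring] at h
    rcases Int.units_eq_one_or ((-1:ℤˣ)^((1:ZMod 2)*j)) with hu | hu <;> rw [hu]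
    · simpa using h
    · rw [Units.neg_smul, one_smul]
      simpa using neg_mem h
end

section
variable {R M M' : Type} [CommRing R]
  [AddCommGroup M] [Module R M] [AddCommGroup M'] [Module R M']
  (Q : QuadraticForm R M) (Q' : QuadraticForm R M')

theorem ofProd_mem_NN {x} (hx : x ∈ evenOdd (Q.prod Q') 0) :
    ofProd Q Q' x ∈ NN Q Q' 0 := by
  induction x, hx using CliffordAlgebra.even_induction with
  | algebraMap r =>
    rw [AlgHom.commutes, GradedTensorProduct.algebraMap_def]
    have h := tmul_mem_NN Q Q' (SetLike.algebraMap_mem_graded (evenOdd Q) r)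
      (SetLike.one_mem_graded (evenOdd Q'))
    rwa [show (0:ZMod 2)+0 = 0 from rfl] at h
  | add x y hx hy ihx ihy => rw [map_add]; exact add_mem ihx ihy
  | ι_mul_ι_mul m₁ m₂ x hx ih =>
    rw [map_mul, map_mul, mul_assoc]
    have h := mul_mem_NN Q Q' m₁ (mul_mem_NN Q Q' m₂ ih)
    rwa [show (0:ZMod 2)+1+1 = 0 from rfl] at h
end

/-- The even Clifford algebra of an orthogonal sum `q ⊥ q'` is naturally
isomorphic to `C₀(q) ⊗ C₀(q') ⊕ C₁(q) ⊗ C₁(q')` with its multiplication coming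
from the `C₀`-bimodule structure on `C₁`, the multiplication `C₁ ⊗ C₁ → C₀`,
and the sign rule of the graded tensor product; the isomorphism sends
`(v + v')·(w + w')` to `v·w ⊗ 1 + 1 ⊗ v'·w' + v ⊗ w' − w ⊗ v'`.

Here the target algebra is realized as the graded tensor product
`evenOdd Q ᵍ⊗[R] evenOdd Q'`, and the image of the even Clifford algebra is
exactly the submodule `C₀(q) ⊗ C₀(q') + C₁(q) ⊗ C₁(q')`. -/
theorem even_clifford_orthogonal_sum
    (R M M' : Type) [CommRing R] [Invertible (2 : R)]
    [AddCommGroup M] [Module R M] [AddCommGroup M'] [Module R M']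
    (Q : QuadraticForm R M) (Q' : QuadraticForm R M') :
    ∃ ψ : CliffordAlgebra.even (Q.prod Q') →ₐ[R]
        (evenOdd Q ᵍ⊗[R] evenOdd Q'),
      Function.Injective ψ ∧
      (∀ (v w : M) (v' w' : M'),
        ψ ((CliffordAlgebra.even.ι (Q.prod Q')).bilin (v, v') (w, w')) =
          (ι Q v * ι Q w) ᵍ⊗ₜ[R] (1 : CliffordAlgebra Q')
          + (1 : CliffordAlgebra Q) ᵍ⊗ₜ[R] (ι Q' v' * ι Q' w')
          + (ι Q v) ᵍ⊗ₜ[R] (ι Q' w')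
          - (ι Q w) ᵍ⊗ₜ[R] (ι Q' v')) ∧
      Subalgebra.toSubmodule ψ.range =
        Submodule.map (GradedTensorProduct.of R (evenOdd Q) (evenOdd Q')).toLinearMap
          (LinearMap.range (TensorProduct.mapIncl (evenOdd Q 0) (evenOdd Q' 0)) ⊔
           LinearMap.range (TensorProduct.mapIncl (evenOdd Q 1) (evenOdd Q' 1))) := by
  refine ⟨(ofProd Q Q').comp (CliffordAlgebra.even (Q.prod Q')).val, ?_, ?_, ?_⟩
  · have hinj : Function.Injective (ofProd Q Q') := by
      have h : ⇑(ofProd Q Q') = ⇑(prodEquiv Q Q') := rfl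
      rw [h]; exact (prodEquiv Q Q').injective
    rw [AlgHom.coe_comp]
    exact hinj.comp Subtype.val_injective
  · intro v w v' w'
    have hval : ((CliffordAlgebra.even.ι (Q.prod Q')).bilin (v, v') (w, w') :
        CliffordAlgebra (Q.prod Q')) = ι (Q.prod Q') (v, v') * ι (Q.prod Q') (w, w') := rfl
    rw [AlgHom.comp_apply, Subalgebra.coe_val, hval, map_mul, ofProd_ι_mk, ofProd_ι_mk,
      add_mul, mul_add, mul_add]
    have hA : (ι Q v ᵍ⊗ₜ[R] (1:CliffordAlgebra Q')) * (ι Q w ᵍ⊗ₜ[R] (1:CliffordAlgebra Q'))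
        = (ι Q v * ι Q w) ᵍ⊗ₜ[R] (1:CliffordAlgebra Q') :=
      GradedTensorProduct.tmul_one_mul_coe_tmul (evenOdd Q) (evenOdd Q') (ι Q v)
        (⟨ι Q w, ι_mem_evenOdd_one Q w⟩ : evenOdd Q 1) (1:CliffordAlgebra Q')
    have hB : (ι Q v ᵍ⊗ₜ[R] (1:CliffordAlgebra Q')) * ((1:CliffordAlgebra Q) ᵍ⊗ₜ[R] ι Q' w')
        = ι Q v ᵍ⊗ₜ[R] ι Q' w' :=
      GradedTensorProduct.tmul_one_mul_one_tmul (evenOdd Q) (evenOdd Q') (ι Q v) (ι Q' w')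
    have hC := GradedTensorProduct.tmul_coe_mul_coe_tmul (evenOdd Q) (evenOdd Q')
      (1:CliffordAlgebra Q) (⟨ι Q' v', ι_mem_evenOdd_one Q' v'⟩ : evenOdd Q' 1)
      (⟨ι Q w, ι_mem_evenOdd_one Q w⟩ : evenOdd Q 1) (1:CliffordAlgebra Q')
    simp only [one_mul, mul_one, uzpow_one, Units.neg_smul, one_smul] at hC
    have hD : ((1:CliffordAlgebra Q) ᵍ⊗ₜ[R] ι Q' v') * ((1:CliffordAlgebra Q) ᵍ⊗ₜ[R] ι Q' w')
        = (1:CliffordAlgebra Q) ᵍ⊗ₜ[R] (ι Q' v' * ι Q' w') :=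
      GradedTensorProduct.tmul_coe_mul_one_tmul (evenOdd Q) (evenOdd Q')
        (1:CliffordAlgebra Q) (⟨ι Q' v', ι_mem_evenOdd_one Q' v'⟩ : evenOdd Q' 1) (ι Q' w')
    rw [hA, hB, hC, hD]
    abel
  · have hNN : NN Q Q' 0 =
        Submodule.map (GradedTensorProduct.of R (evenOdd Q) (evenOdd Q')).toLinearMap
          (LinearMap.range (TensorProduct.mapIncl (evenOdd Q 0) (evenOdd Q' 0)) ⊔
           LinearMap.range (TensorProduct.mapIncl (evenOdd Q 1) (evenOdd Q' 1))) := rfl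
    rw [← hNN]
    apply le_antisymm
    · rintro _ ⟨⟨y, hy⟩, rfl⟩
      refine ofProd_mem_NN Q Q' ?_
      rw [← CliffordAlgebra.even_toSubmodule, Subalgebra.mem_toSubmodule]
      exact hy
    · refine NN_le Q Q' 0 _ ?_
      intro j k hjk a b ha hb
      have hmem : toProd Q Q' (a ᵍ⊗ₜ[R] b) ∈ evenOdd (Q.prod Q') 0 := by
        rw [toProd, GradedTensorProduct.lift_tmul]
        have := SetLike.mul_mem_graded
          (aux_map_mem_evenOdd (QuadraticMap.Isometry.inl Q Q') ha)
          (aux_map_mem_evenOdd (QuadraticMap.Isometry.inr Q Q') hb)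
        rwa [hjk] at this
      refine (Subalgebra.mem_toSubmodule _).mpr
        ⟨⟨toProd Q Q' (a ᵍ⊗ₜ[R] b), ?_⟩, ?_⟩
      · rw [← Subalgebra.mem_toSubmodule, CliffordAlgebra.even_toSubmodule]
        exact hmem
      · exact AlgHom.congr_fun (ofProd_comp_toProd Q Q') (a ᵍ⊗ₜ[R] b)
end

section
/- Let k be a field of characteristic ≠ 2 and (V, q) a nondegenerate quadratic space of dimension n ≡ 2 (mod 4) with trivial signed discriminant, so that C₀(q) ≅ A⁺ × A⁻. Then the canonical involution τ₀ of C₀(q) (induced by reversal of products of vectors) exchanges the two factors, giving a k-algebra isomorphism A⁺ ≅ (A⁻)^op. -/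
/-!
Take an orthogonal basis `e₁, …, eₙ` of `V` and the volume element `δ = e₁ ⋯ eₙ`. As `n` is even,
`δ` anticommutes with every vector, hence is central in `C₀(q)`; reversal gives
`τ₀ δ = (-1) ^ (n choose 2) • δ = -δ` as `n ≡ 2 (mod 4)`; and `δ² = -∏ q(eᵢ)` is a nonzero
scalar. In `A × B`, with `A` and `B` central, `δ = (s, t)` with `s² = t²`, and `s ≠ t` because
`τ₀` fixes scalars but negates `δ`; so `t = -s`. Hence `τ₀` sends the idempotent
`(1 + δ / s) / 2 = (1, 0)` to `(0, 1)`, and the anti-automorphism `τ₀` restricts to an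
isomorphism `A ≅ Bᵐᵒᵖ`.
-/

/-- A finite-dimensional central simple algebra. -/
def IsCSA (k A : Type) [Field k] [Ring A] [Algebra k A] : Prop :=
  Algebra.IsCentral k A ∧ IsSimpleRing A ∧ FiniteDimensional k A

open MulOpposite

section Anticommuting

variable {ι R : Type*} [DecidableEq ι] [Ring R] {f : ι → R}

theorem mul_prod_map_of_pairwise_anticomm (hf : Pairwise fun i j => f i * f j = -(f j * f i))
    (j : ι) : ∀ l : List ι,
      f j * (l.map f).prod = (-1 : ℤ) ^ (l.length - l.count j) • ((l.map f).prod * f j)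
  | [] => by simp
  | i :: l => by
    have ih := mul_prod_map_of_pairwise_anticomm hf j l
    rw [List.map_cons, List.prod_cons, ← mul_assoc]
    obtain rfl | hij := eq_or_ne i j
    · rw [List.count_cons_self, List.length_cons, Nat.add_sub_add_right]
      conv_rhs => rw [mul_assoc, ← mul_smul_comm, ← ih]
      rw [mul_assoc]
    · rw [hf hij.symm, neg_mul, mul_assoc, ih, List.count_cons_of_ne hij, List.length_cons,
        Nat.sub_add_comm List.count_le_length, pow_succ, mul_neg_one, neg_smul, mul_smul_comm,
        mul_assoc]

theorem reverse_prod_map_of_pairwise_anticomm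
    (hf : Pairwise fun i j => f i * f j = -(f j * f i)) :
    ∀ l : List ι, l.Nodup →
      (l.map f).reverse.prod = (-1 : ℤ) ^ l.length.choose 2 • (l.map f).prod
  | [], _ => by simp
  | i :: l, hl => by
    obtain ⟨hi, hl⟩ := List.nodup_cons.mp hl
    have hcomm : (l.map f).prod * f i = (-1 : ℤ) ^ l.length • (f i * (l.map f).prod) := by
      rw [mul_prod_map_of_pairwise_anticomm hf i l, List.count_eq_zero_of_not_mem hi,
        Nat.sub_zero, smul_smul, ← mul_pow, neg_one_mul, neg_neg, one_pow, one_smul]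
    rw [List.map_cons, List.reverse_cons, List.prod_append, List.prod_singleton,
      reverse_prod_map_of_pairwise_anticomm hf l hl, smul_mul_assoc, hcomm, smul_smul, ← pow_add,
      List.length_cons, Nat.choose_succ_succ', Nat.choose_one_right, List.prod_cons, add_comm]

end Anticommuting

theorem Nat.odd_choose_two_of_mod_four_eq_two {n : ℕ} (hn : n % 4 = 2) : Odd (n.choose 2) := by
  obtain ⟨j, rfl⟩ : ∃ j, n = 4 * j + 2 := ⟨n / 4, by omega⟩
  have hprod : (4 * j + 2) * (4 * j + 2 - 1) = 2 * ((2 * j + 1) * (4 * j + 1)) := by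
    rw [show 4 * j + 2 - 1 = 4 * j + 1 by omega]
    ring
  rw [Nat.choose_two_right, hprod, Nat.mul_div_cancel_left _ two_pos]
  exact ⟨4 * j * j + 3 * j, by ring⟩

namespace CliffordAlgebra

variable {R M : Type*} [CommRing R] [AddCommGroup M] [Module R M] (Q : QuadraticForm R M)

theorem prod_map_ι_mem_evenOdd (l : List M) : (l.map (ι Q)).prod ∈ evenOdd Q l.length := by
  simpa using SetLike.list_prod_map_mem_graded l (fun _ => (1 : ZMod 2)) (ι Q)
    fun x _ => ι_mem_evenOdd_one Q x

theorem prod_map_ι_mul_reverse : ∀ l : List M,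
    (l.map (ι Q)).prod * reverse (l.map (ι Q)).prod = algebraMap R _ (l.map Q).prod
  | [] => by simp
  | x :: l => by
    rw [List.map_cons, List.prod_cons, reverse.map_mul, reverse_ι, mul_assoc,
      ← mul_assoc _ (reverse _), prod_map_ι_mul_reverse l, Algebra.left_comm, ι_sq_scalar,
      ← map_mul, List.map_cons, List.prod_cons, mul_comm]

variable {n : ℕ}

def volumeElement (v : Fin n → M) : CliffordAlgebra Q :=
  ((List.finRange n).map fun i => ι Q (v i)).prod

theorem volumeElement_eq_prod_map_ι (v : Fin n → M) :
    volumeElement Q v = ((List.ofFn v).map (ι Q)).prod := by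
  rw [volumeElement, List.ofFn_eq_map, List.map_map]
  rfl

theorem volumeElement_mem_evenOdd (v : Fin n → M) : volumeElement Q v ∈ evenOdd Q n := by
  simpa [volumeElement_eq_prod_map_ι] using prod_map_ι_mem_evenOdd Q (List.ofFn v)

theorem volumeElement_mem_even (hn : Even n) (v : Fin n → M) : volumeElement Q v ∈ even Q := by
  have := volumeElement_mem_evenOdd Q v
  rwa [ZMod.natCast_eq_zero_iff_even.mpr hn] at this

theorem volumeElement_mul_reverse (v : Fin n → M) :
    volumeElement Q v * reverse (volumeElement Q v) = algebraMap R _ (∏ i, Q (v i)) := by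
  rw [volumeElement_eq_prod_map_ι, prod_map_ι_mul_reverse, List.map_ofFn, List.prod_ofFn]
  rfl

variable {Q}

theorem reverse_volumeElement {v : Fin n → M} (hv : Pairwise fun i j => Q.IsOrtho (v i) (v j)) :
    reverse (volumeElement Q v) = (-1 : ℤ) ^ n.choose 2 • volumeElement Q v := by
  have h := reverse_prod_map_of_pairwise_anticomm (f := fun i => ι Q (v i))
    (fun i j hij => ι_mul_ι_comm_of_isOrtho (hv hij)) _ (List.nodup_finRange n)
  rw [List.length_finRange] at h
  rw [volumeElement_eq_prod_map_ι, reverse_prod_map_ι, List.ofFn_eq_map, List.map_map]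
  exact h

theorem ι_mul_volumeElement {v : Module.Basis (Fin n) R M}
    (hv : Pairwise fun i j => Q.IsOrtho (v i) (v j)) (hn : Even n) (w : M) :
    ι Q w * volumeElement Q v = -(volumeElement Q v * ι Q w) := by
  have hbasis : ∀ j, ι Q (v j) * volumeElement Q v = -(volumeElement Q v * ι Q (v j)) := by
    intro j
    have hodd : Odd (n - 1) := Nat.Even.sub_odd (by have := j.pos; omega) hn odd_one
    rw [volumeElement, mul_prod_map_of_pairwise_anticomm (f := fun i => ι Q (v i))
      (fun i j hij => ι_mul_ι_comm_of_isOrtho (hv hij)) j,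
      List.count_eq_one_of_mem (List.nodup_finRange n) (List.mem_finRange j),
      List.length_finRange, hodd.neg_one_pow, neg_one_zsmul]
  have hmap : (LinearMap.mulRight R (volumeElement Q v)).comp (ι Q)
      = (-LinearMap.mulLeft R (volumeElement Q v)).comp (ι Q) :=
    v.ext fun j => by simpa using hbasis j
  simpa using LinearMap.congr_fun hmap w

theorem volumeElement_commute_of_mem_even {v : Module.Basis (Fin n) R M}
    (hv : Pairwise fun i j => Q.IsOrtho (v i) (v j)) (hn : Even n) {x : CliffordAlgebra Q}
    (hx : x ∈ evenOdd Q 0) : Commute (volumeElement Q v) x := by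
  have hanti (w : M) : volumeElement Q v * ι Q w = -(ι Q w * volumeElement Q v) := by
    rw [ι_mul_volumeElement hv hn, neg_neg]
  induction x, hx using even_induction with
  | algebraMap r => exact Algebra.commute_algebraMap_right r _
  | add x y _ _ hx hy => exact hx.add_right hy
  | ι_mul_ι_mul m₁ m₂ x _ hx =>
    refine Commute.mul_right ?_ hx
    rw [Commute, SemiconjBy, ← mul_assoc, hanti, neg_mul, mul_assoc, hanti, mul_neg, neg_neg,
      mul_assoc]

variable (Q) in
def evenReverseOpEquiv : even Q ≃ₐ[R] (even Q)ᵐᵒᵖ where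
  toFun x := op ⟨reverse (x : CliffordAlgebra Q), (reverse_mem_evenOdd_iff Q).mpr x.2⟩
  invFun y := ⟨reverse (y.unop : CliffordAlgebra Q), (reverse_mem_evenOdd_iff Q).mpr y.unop.2⟩
  left_inv _ := Subtype.ext (reverse_reverse _)
  right_inv _ := unop_injective (Subtype.ext (reverse_reverse _))
  map_mul' _ _ := unop_injective (Subtype.ext (reverse.map_mul _ _))
  map_add' _ _ := unop_injective (Subtype.ext (map_add _ _ _))
  commutes' r := unop_injective (Subtype.ext (reverse.commutes r))

open Module QuadraticMap in
theorem exists_mem_center_even_reverse_eq_neg {k V : Type*} [Field k] [AddCommGroup V]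
    [Module k V] [FiniteDimensional k V] {Q : QuadraticForm k V} (h2 : (2 : k) ≠ 0)
    (hQ : (polarBilin Q).SeparatingLeft) (hn : finrank k V % 4 = 2) :
    ∃ D ∈ Subalgebra.center k (even Q), (∃ c ≠ 0, D * D = algebraMap k (even Q) c) ∧
      evenReverseOpEquiv Q D = op (-D) := by
  have : Invertible (2 : k) := invertibleOfNonzero h2
  obtain ⟨v, hv⟩ := LinearMap.BilinForm.exists_orthogonal_basis (B := polarBilin Q)
    ⟨fun x y => polar_comm Q x y⟩
  have hortho : Pairwise fun i j => Q.IsOrtho (v i) (v j) :=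
    fun i j hij => isOrtho_polarBilin.mp (hv hij)
  have hQv : ∏ i, Q (v i) ≠ 0 := Finset.prod_ne_zero_iff.mpr fun i _ hi =>
    hv.not_isOrtho_basis_self_of_separatingLeft hQ i (by simp [polar_self, hi])
  have heven : Even (finrank k V) := Nat.even_iff.mpr (by omega)
  have hrev : reverse (volumeElement Q v) = -volumeElement Q v := by
    rw [reverse_volumeElement hortho, (Nat.odd_choose_two_of_mod_four_eq_two hn).neg_one_pow,
      neg_one_zsmul]
  refine ⟨⟨volumeElement Q v, volumeElement_mem_even Q heven v⟩, ?_,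
    ⟨-∏ i, Q (v i), neg_ne_zero.mpr hQv, ?_⟩, unop_injective (Subtype.ext hrev)⟩
  · rw [Subalgebra.mem_center_iff]
    exact fun y => Subtype.ext (volumeElement_commute_of_mem_even hortho heven y.2).eq.symm
  · refine Subtype.ext ?_
    rw [Subalgebra.coe_mul, Subalgebra.coe_algebraMap, map_neg, ← volumeElement_mul_reverse,
      hrev, mul_neg, neg_neg]

end CliffordAlgebra

namespace AlgEquiv

variable {R A B C D : Type*} [CommSemiring R] [Semiring A] [Semiring B] [Semiring C]
  [Semiring D] [Algebra R A] [Algebra R B] [Algebra R C] [Algebra R D]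

variable (R A B) in
@[simps]
def opProd : (A × B)ᵐᵒᵖ ≃ₐ[R] Aᵐᵒᵖ × Bᵐᵒᵖ where
  toFun x := (MulOpposite.op x.unop.1, MulOpposite.op x.unop.2)
  invFun y := MulOpposite.op (y.1.unop, y.2.unop)
  left_inv _ := rfl
  right_inv _ := rfl
  map_mul' _ _ := rfl
  map_add' _ _ := rfl
  commutes' _ := rfl

def prodFstEquivSnd (T : (A × B) ≃ₐ[R] (C × D)) (hT : T (1, 0) = (0, 1)) : A ≃ₐ[R] D where
  toFun a := (T (a, 0)).2
  invFun d := (T.symm (0, d)).1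
  left_inv a := by
    have : ((0 : C), (T (a, 0)).2) = T (a, 0) := by
      calc ((0 : C), (T (a, 0)).2) = T (1, 0) * T (a, 0) := by
            rw [hT]; exact Prod.ext (zero_mul _).symm (one_mul _).symm
        _ = T (a, 0) := by rw [← map_mul, Prod.mk_mul_mk, one_mul, mul_zero]
    simp only [this, symm_apply_apply]
  right_inv d := by
    have : ((T.symm (0, d)).1, (0 : B)) = T.symm (0, d) := by
      calc ((T.symm (0, d)).1, (0 : B)) = T.symm (0, 1) * T.symm (0, d) := by
            rw [← hT, symm_apply_apply]; exact Prod.ext (one_mul _).symm (zero_mul _).symm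
        _ = T.symm (0, d) := by rw [← map_mul, Prod.mk_mul_mk, one_mul, mul_zero]
    simp only [this, apply_symm_apply]
  map_mul' _ _ := by
    simp only [← Prod.snd_mul, ← map_mul, Prod.mk_mul_mk, mul_zero]
  map_add' _ _ := by
    simp only [← Prod.snd_add, ← map_add, Prod.mk_add_mk, add_zero]
  commutes' r := by
    have : (algebraMap R A r, (0 : B)) = r • (1, 0) := by simp [Algebra.algebraMap_eq_smul_one]
    change (T (algebraMap R A r, 0)).2 = algebraMap R D r
    rw [this, map_smul, hT, Prod.smul_snd, Algebra.algebraMap_eq_smul_one]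

end AlgEquiv

theorem AlgEquiv.map_one_zero_of_map_one_neg_one {R A B C D : Type*} [CommRing R] [Ring A]
    [Ring B] [Ring C] [Ring D] [Algebra R A] [Algebra R B] [Algebra R C] [Algebra R D]
    [Invertible (2 : R)] (T : (A × B) ≃ₐ[R] (C × D)) (h : T (1, -1) = (-1, 1)) :
    T (1, 0) = (0, 1) := by
  have hAB : ((1 : A), (0 : B)) = (⅟2 : R) • (1 + (1, -1)) := by
    ext <;> simp [← two_smul R, smul_smul]
  have hCD : ((0 : C), (1 : D)) = (⅟2 : R) • (1 + (-1, 1)) := by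
    ext <;> simp [← two_smul R, smul_smul]
  rw [hAB, map_smul, map_add, map_one, h, hCD]

theorem Prod.exists_eq_algebraMap_of_mem_center {R A B : Type*} [CommSemiring R] [Semiring A]
    [Semiring B] [Algebra R A] [Algebra R B] [Algebra.IsCentral R A] [Algebra.IsCentral R B]
    {z : A × B} (hz : z ∈ Subalgebra.center R (A × B)) :
    ∃ s t : R, z = (algebraMap R A s, algebraMap R B t) := by
  rw [Subalgebra.center_prod, Subalgebra.mem_prod] at hz
  obtain ⟨s, hs⟩ := Algebra.mem_bot.mp (Algebra.IsCentral.out hz.1)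
  obtain ⟨t, ht⟩ := Algebra.mem_bot.mp (Algebra.IsCentral.out hz.2)
  exact ⟨s, t, Prod.ext hs.symm ht.symm⟩

theorem nonempty_algEquiv_op_of_map_eq_neg {k A B : Type*} [Field k] [Ring A] [Ring B]
    [Algebra k A] [Algebra k B] [Nontrivial A] [Nontrivial B] [Algebra.IsCentral k A]
    [Algebra.IsCentral k B] (h2 : (2 : k) ≠ 0) (T : (A × B) ≃ₐ[k] (A × B)ᵐᵒᵖ) {z : A × B}
    (hz : z ∈ Subalgebra.center k (A × B)) {c : k} (hc : c ≠ 0)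
    (hzz : z * z = algebraMap k _ c) (hTz : T z = op (-z)) :
    Nonempty (A ≃ₐ[k] Bᵐᵒᵖ) := by
  have : Invertible (2 : k) := invertibleOfNonzero h2
  obtain ⟨s, t, rfl⟩ := Prod.exists_eq_algebraMap_of_mem_center hz
  have hs : s * s = c := (algebraMap k A).injective (by simpa using congrArg Prod.fst hzz)
  have ht : t * t = c := (algebraMap k B).injective (by simpa using congrArg Prod.snd hzz)
  have hst : s ≠ t := by
    rintro rfl
    have hscalar : T (algebraMap k A s, algebraMap k B s) =
        op (algebraMap k A s, algebraMap k B s) := T.commutes s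
    rw [hscalar, op_inj] at hTz
    have hneg : s = -s := (algebraMap k A).injective (by simpa using congrArg Prod.fst hTz)
    have hzero : s = 0 :=
      (mul_eq_zero.mp (by linear_combination hneg : (2 : k) * s = 0)).resolve_left h2
    exact hc (by rw [← hs, hzero, mul_zero])
  have hts : t = -s := neg_eq_iff_eq_neg.mp
    ((mul_self_eq_mul_self_iff.mp (hs.trans ht.symm)).resolve_left hst).symm
  have hs0 : s ≠ 0 := fun h => hst (by rw [hts, h, neg_zero])
  set T' := T.trans (AlgEquiv.opProd k A B)
  have hT' : T' (1, -1) = (-1, 1) := by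
    have : ((1 : A), (-1 : B)) = s⁻¹ • (algebraMap k A s, algebraMap k B t) := by
      ext <;> simp [hts, Algebra.algebraMap_eq_smul_one, smul_smul, hs0]
    rw [this, map_smul, AlgEquiv.trans_apply, hTz]
    ext <;> simp [hts, Algebra.algebraMap_eq_smul_one, smul_smul, hs0]
  exact ⟨AlgEquiv.prodFstEquivSnd T' (AlgEquiv.map_one_zero_of_map_one_neg_one T' hT')⟩

theorem even_clifford_factors_opposite_general
    (k V : Type) [Field k] [AddCommGroup V] [Module k V]
    (hchar : (2 : k) ≠ 0)
    (m : ℕ) (hmodd : Odd m) (b : Module.Basis (Fin (2 * m)) k V)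
    (Q : QuadraticForm k V)
    (hQ : (QuadraticMap.polarBilin Q).SeparatingLeft) :
    (∀ x ∈ CliffordAlgebra.evenOdd Q 0,
      CliffordAlgebra.reverse (Q := Q) x ∈ CliffordAlgebra.evenOdd Q 0) ∧
    ∀ (A B : Type) [Ring A] [Ring B] [Algebra k A] [Algebra k B],
      IsCSA k A → IsCSA k B →
      Nonempty (CliffordAlgebra.even Q ≃ₐ[k] (A × B)) →
      Nonempty (A ≃ₐ[k] Bᵐᵒᵖ) := by
  refine ⟨fun x hx => (CliffordAlgebra.reverse_mem_evenOdd_iff Q).mpr hx,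
    fun A B _ _ _ _ ⟨_, _, _⟩ ⟨_, _, _⟩ ⟨φ⟩ => ?_⟩
  have : FiniteDimensional k V := Module.Finite.of_basis b
  have hn : Module.finrank k V % 4 = 2 := by
    obtain ⟨j, rfl⟩ := hmodd
    rw [Module.finrank_eq_card_basis b, Fintype.card_fin]
    omega
  obtain ⟨D, hD, ⟨c, hc, hDD⟩, hρD⟩ :=
    CliffordAlgebra.exists_mem_center_even_reverse_eq_neg hchar hQ hn
  refine nonempty_algEquiv_op_of_map_eq_neg hchar
    (φ.symm.trans ((CliffordAlgebra.evenReverseOpEquiv Q).trans (AlgEquiv.op φ)))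
    (MulEquivClass.apply_mem_center φ hD) hc (by rw [← map_mul, hDD, φ.commutes]) ?_
  simp [hρD]

/-- For a nondegenerate quadratic space of dimension `n ≡ 2 (mod 4)` with
trivial signed discriminant, writing `C₀(q) ≅ A⁺ × A⁻`, the canonical
involution (induced by reversal, which preserves the even part) exchanges the
two factors, giving `A⁺ ≅ (A⁻)^op`. -/
theorem even_clifford_factors_opposite
    (k V : Type) [Field k] [AddCommGroup V] [Module k V]
    (hchar : (2 : k) ≠ 0)
    (m : ℕ) (hmodd : Odd m) (b : Module.Basis (Fin (2 * m)) k V)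
    (Q : QuadraticForm k V)
    (hQ : (QuadraticMap.polarBilin Q).SeparatingLeft)
    (hdisc : ∃ c : k, c ≠ 0 ∧
      (-1 : k) ^ m *
        (LinearMap.toMatrix₂ b b (QuadraticMap.polarBilin Q)).det = c ^ 2) :
    (∀ x ∈ CliffordAlgebra.evenOdd Q 0,
      CliffordAlgebra.reverse (Q := Q) x ∈ CliffordAlgebra.evenOdd Q 0) ∧
    ∀ (A B : Type) [Ring A] [Ring B] [Algebra k A] [Algebra k B],
      IsCSA k A → IsCSA k B →
      Nonempty (CliffordAlgebra.even Q ≃ₐ[k] (A × B)) →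
      Nonempty (A ≃ₐ[k] Bᵐᵒᵖ) :=
  even_clifford_factors_opposite_general k V hchar m hmodd b Q hQ
end
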